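/- arXiv:2006.14057 — 2 statements merged into one kernel-verified Lean document; each statement's English description precedes it below -/
import Mathlib

section
/- Let H be an optimal Hermite Normal Form row basis of a full-rank integer lattice L ⊆ ℤ^N with D = det(L) ≥ 1. Then there exists a nonzero coefficient vector x ∈ ℤ^N with |x_i| ≤ √N · D^{1/N} for 1 ≤ i ≤ N−1 and |x_N| ≤ N^{3/2} · D^{1/N}, such that the lattice vector x·H has Euclidean norm equal to λ₁(L); i.e., a shortest vector of L is represented by coefficients lying in the box [−N^{3/2} D^{1/N}, N^{3/2} D^{1/N}]^N. -/
open Matrix Real Finset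

/-- The Euclidean norm of a vector in `ℝ^N`. -/
noncomputable def euclNorm {N : ℕ} (v : Fin N → ℝ) : ℝ := Real.sqrt (∑ i, v i ^ 2)

/-- `λ₁(L)` for the integer lattice `L = {x·H : x ∈ ℤ^N}` generated by the rows of
the integer matrix `H`: the minimum Euclidean norm of a nonzero lattice vector. -/
noncomputable def lambda1Int {N : ℕ} (H : Matrix (Fin N) (Fin N) ℤ) : ℝ :=
  sInf {r : ℝ | ∃ x : Fin N → ℤ, x ≠ 0 ∧ r = euclNorm (fun j => ((x ᵥ* H) j : ℝ))}

/-!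
The lattice of an optimal HNF basis is `{v ∈ ℤ^N : D ∣ v_N - ∑_{i<N} b_i v_i}`. Pigeonhole on
the cube `{0,…,M}^N` with `(M+1)^N > D` yields a nonzero lattice vector with coordinates in
`[-M, M]`, `M = ⌊D^{1/N}⌋`, so `λ₁(L) ≤ √N · D^{1/N}`. For a shortest vector `x·H` the first
`N-1` coordinates are the `x_i` themselves, hence `|x_i| ≤ λ₁(L)`, and the last coordinate
`x_N D + ∑ b_i x_i`, of size at most `λ₁(L)`, forces `|x_N| ≤ N · λ₁(L)`.
-/

lemma abs_le_euclNorm {N : ℕ} (v : Fin N → ℝ) (j : Fin N) : |v j| ≤ euclNorm v := by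
  rw [← Real.sqrt_sq_eq_abs]
  exact Real.sqrt_le_sqrt (single_le_sum (fun i _ => sq_nonneg (v i)) (mem_univ j))

lemma euclNorm_le_of_abs_le {N : ℕ} {v : Fin N → ℝ} {r : ℝ} (hr : 0 ≤ r)
    (hv : ∀ i, |v i| ≤ r) : euclNorm v ≤ √N * r := by
  rw [← Real.sqrt_sq hr, ← Real.sqrt_mul (Nat.cast_nonneg N)]
  refine Real.sqrt_le_sqrt ?_
  calc ∑ i, v i ^ 2 ≤ ∑ _i : Fin N, r ^ 2 :=
        sum_le_sum fun i _ => sq_abs (v i) ▸ pow_le_pow_left₀ (abs_nonneg _) (hv i) 2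
    _ = N * r ^ 2 := by simp

lemma euclNorm_intCast {N : ℕ} (v : Fin N → ℤ) :
    euclNorm (fun j => (v j : ℝ)) = √((∑ j, (v j).natAbs ^ 2 : ℕ) : ℝ) := by
  simp only [euclNorm, Nat.cast_sum, Nat.cast_pow, Nat.cast_natAbs, Int.cast_abs, sq_abs]

lemma lambda1Int_le_euclNorm {N : ℕ} (H : Matrix (Fin N) (Fin N) ℤ) {x : Fin N → ℤ}
    (hx : x ≠ 0) : lambda1Int H ≤ euclNorm (fun j => ((x ᵥ* H) j : ℝ)) :=
  csInf_le (⟨0, by rintro _ ⟨y, -, rfl⟩; exact Real.sqrt_nonneg _⟩ : BddBelow _) ⟨x, hx, rfl⟩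

/-- Squared norms of integer vectors are natural numbers, so the infimum is attained. -/
lemma exists_euclNorm_eq_lambda1Int {N : ℕ} (hN : 0 < N) (H : Matrix (Fin N) (Fin N) ℤ) :
    ∃ x : Fin N → ℤ, x ≠ 0 ∧ euclNorm (fun j => ((x ᵥ* H) j : ℝ)) = lambda1Int H := by
  let sqNorm : (Fin N → ℤ) → ℕ := fun x => ∑ j, ((x ᵥ* H) j).natAbs ^ 2
  obtain ⟨x₀, hx₀, hmin⟩ := (InvImage.wf sqNorm wellFounded_lt).has_min {x | x ≠ 0}
    ⟨Pi.single ⟨0, hN⟩ 1, by simp⟩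
  refine ⟨x₀, hx₀, le_antisymm (le_csInf ⟨_, x₀, hx₀, rfl⟩ ?_) (lambda1Int_le_euclNorm H hx₀)⟩
  rintro _ ⟨x, hx, rfl⟩
  rw [euclNorm_intCast, euclNorm_intCast]
  exact Real.sqrt_le_sqrt (Nat.cast_le.mpr (not_lt.mp (hmin x hx)))

lemma AddMonoidHom.exists_ne_zero_map_eq_zero_abs_le {ι G : Type*} [Fintype ι] [DecidableEq ι]
    [AddCommGroup G] [Fintype G] (φ : (ι → ℤ) →+ G) (M : ℕ)
    (hcard : Fintype.card G < (M + 1) ^ Fintype.card ι) :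
    ∃ v : ι → ℤ, v ≠ 0 ∧ φ v = 0 ∧ ∀ i, |v i| ≤ M := by
  obtain ⟨y, z, hyz, hφ⟩ := Fintype.exists_ne_map_eq_of_card_lt
    (fun y : ι → Fin (M + 1) => φ fun i => (y i : ℤ)) (by simpa using hcard)
  refine ⟨(fun i => (y i : ℤ)) - fun i => (z i : ℤ), ?_, by rw [map_sub, hφ, sub_self], ?_⟩
  · exact fun h => hyz (funext fun i => Fin.ext (by simpa [sub_eq_zero] using congrFun h i))
  · intro i
    have := (y i).isLt
    have := (z i).isLt
    simp only [Pi.sub_apply, abs_le]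
    omega

lemma lt_floor_rpow_one_div_add_one_pow {a : ℝ} (ha : 0 ≤ a) {n : ℕ} (hn : n ≠ 0) :
    a < ((⌊a ^ ((1 : ℝ) / n)⌋₊ : ℝ) + 1) ^ n := by
  conv_lhs => rw [← Real.rpow_inv_natCast_pow ha hn, ← one_div]
  exact pow_lt_pow_left₀ (Nat.lt_floor_add_one _) (by positivity) hn

lemma natCast_rpow_three_halves (n : ℕ) : (n : ℝ) ^ ((3 : ℝ) / 2) = n * √n := by
  rw [Real.sqrt_eq_rpow, show (3 : ℝ) / 2 = 1 + 1 / 2 by norm_num,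
    Real.rpow_add' (Nat.cast_nonneg n) (by norm_num), Real.rpow_one]

section OptimalHNF

variable {N : ℕ} {D : ℤ} {H : Matrix (Fin N) (Fin N) ℤ} {l : Fin N}

def hnfForm (H : Matrix (Fin N) (Fin N) ℤ) (l : Fin N) : (Fin N → ℤ) →+ ℤ :=
  AddMonoidHom.mk' (fun v => v l - ∑ i ∈ univ.erase l, v i * H i l) fun a b => by
    simp only [Pi.add_apply, add_mul, sum_add_distrib]
    ring

lemma vecMul_apply_of_ne (hdiag : ∀ i : Fin N, i ≠ l → H i i = 1)
    (hoff : ∀ i j : Fin N, i ≠ j → j ≠ l → H i j = 0) (x : Fin N → ℤ) {j : Fin N}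
    (hj : j ≠ l) : (x ᵥ* H) j = x j := by
  rw [vecMul, dotProduct, sum_eq_single j (fun i _ hij => by rw [hoff i j hij hj, mul_zero])
    (by simp), hdiag j hj, mul_one]

lemma vecMul_apply_last (hDD : H l l = D) (x : Fin N → ℤ) :
    (x ᵥ* H) l = x l * D + ∑ i ∈ univ.erase l, x i * H i l := by
  rw [vecMul, dotProduct, ← add_sum_erase _ _ (mem_univ l), hDD]

lemma exists_vecMul_eq_of_dvd (hdiag : ∀ i : Fin N, i ≠ l → H i i = 1) (hDD : H l l = D)
    (hoff : ∀ i j : Fin N, i ≠ j → j ≠ l → H i j = 0) {v : Fin N → ℤ}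
    (hv : D ∣ hnfForm H l v) : ∃ x : Fin N → ℤ, x ᵥ* H = v := by
  obtain ⟨k, hk⟩ := hv
  refine ⟨Function.update v l k, funext fun j => ?_⟩
  rcases eq_or_ne j l with rfl | hj
  · rw [vecMul_apply_last hDD, Function.update_self,
      sum_congr rfl fun i hi => by rw [Function.update_of_ne (ne_of_mem_erase hi)]]
    change v j - _ = D * k at hk
    linarith
  · rw [vecMul_apply_of_ne hdiag hoff _ hj, Function.update_of_ne hj]

lemma exists_ne_zero_abs_vecMul_le (hD : 1 ≤ D) (hdiag : ∀ i : Fin N, i ≠ l → H i i = 1)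
    (hDD : H l l = D) (hoff : ∀ i j : Fin N, i ≠ j → j ≠ l → H i j = 0) {M : ℕ}
    (hM : D < (M + 1) ^ N) : ∃ x : Fin N → ℤ, x ≠ 0 ∧ ∀ j, |(x ᵥ* H) j| ≤ M := by
  lift D to ℕ using by omega
  have : NeZero D := ⟨by omega⟩
  obtain ⟨v, hv0, hvD, hvM⟩ :=
    ((Int.castAddHom (ZMod D)).comp (hnfForm H l)).exists_ne_zero_map_eq_zero_abs_le M
      (by simpa using (by exact_mod_cast hM : D < (M + 1) ^ N))
  obtain ⟨x, rfl⟩ :=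
    exists_vecMul_eq_of_dvd hdiag hDD hoff ((ZMod.intCast_zmod_eq_zero_iff_dvd _ _).mp hvD)
  exact ⟨x, by rintro rfl; exact hv0 (zero_vecMul H), hvM⟩

lemma lambda1Int_le_sqrt_mul_rpow (hD : 1 ≤ D) (hdiag : ∀ i : Fin N, i ≠ l → H i i = 1)
    (hDD : H l l = D) (hoff : ∀ i j : Fin N, i ≠ j → j ≠ l → H i j = 0) :
    lambda1Int H ≤ √N * (D : ℝ) ^ ((1 : ℝ) / N) := by
  have hD₀ : (0 : ℝ) ≤ D := by exact_mod_cast (zero_le_one.trans hD)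
  obtain ⟨x, hx, hxM⟩ := exists_ne_zero_abs_vecMul_le hD hdiag hDD hoff
    (M := ⌊(D : ℝ) ^ ((1 : ℝ) / N)⌋₊)
    (by exact_mod_cast lt_floor_rpow_one_div_add_one_pow hD₀ l.pos.ne')
  calc lambda1Int H ≤ euclNorm (fun j => ((x ᵥ* H) j : ℝ)) := lambda1Int_le_euclNorm H hx
    _ ≤ √N * ⌊(D : ℝ) ^ ((1 : ℝ) / N)⌋₊ :=
        euclNorm_le_of_abs_le (Nat.cast_nonneg _) fun j => by exact_mod_cast hxM j
    _ ≤ √N * (D : ℝ) ^ ((1 : ℝ) / N) := by gcongr; exact Nat.floor_le (by positivity)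

lemma abs_last_le_mul (hD : 1 ≤ D) (hDD : H l l = D)
    (hcol : ∀ i : Fin N, i ≠ l → 0 ≤ H i l ∧ H i l < D) {x : Fin N → ℤ} {r : ℝ}
    (hx : ∀ i, i ≠ l → |(x i : ℝ)| ≤ r) (hxl : |((x ᵥ* H) l : ℝ)| ≤ r) :
    |(x l : ℝ)| ≤ N * r := by
  have hr : 0 ≤ r := (abs_nonneg _).trans hxl
  have hD₁ : (1 : ℝ) ≤ D := by exact_mod_cast hD
  have hsum : |∑ i ∈ univ.erase l, (x i * H i l : ℝ)| ≤ (N - 1) * (r * D) := by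
    calc _ ≤ ∑ i ∈ univ.erase l, |(x i * H i l : ℝ)| := abs_sum_le_sum_abs _ _
      _ ≤ ∑ _i ∈ univ.erase l, r * D := sum_le_sum fun i hi => by
          obtain ⟨h0, hlt⟩ := hcol i (ne_of_mem_erase hi)
          have h0' : (0 : ℝ) ≤ H i l := by exact_mod_cast h0
          rw [abs_mul, abs_of_nonneg h0']
          exact mul_le_mul (hx i (ne_of_mem_erase hi)) (by exact_mod_cast hlt.le) h0' hr
      _ = (N - 1) * (r * D) := by
          rw [sum_const, card_erase_of_mem (mem_univ l), card_univ, Fintype.card_fin,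
            nsmul_eq_mul, Nat.cast_pred l.pos]
  have hlast : (x l : ℝ) * D = (x ᵥ* H) l - ∑ i ∈ univ.erase l, (x i * H i l : ℝ) := by
    rw [vecMul_apply_last hDD]
    push_cast
    ring
  have hmul : |(x l : ℝ)| * D ≤ N * r * D :=
    calc |(x l : ℝ)| * D = |(x l : ℝ) * D| := by
          rw [abs_mul, abs_of_pos (a := (D : ℝ)) (by linarith)]
      _ ≤ r + (N - 1) * (r * D) := hlast ▸ (abs_sub _ _).trans (add_le_add hxl hsum)
      _ ≤ N * r * D := by nlinarith [le_mul_of_one_le_right hr hD₁]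
  exact le_of_mul_le_mul_right hmul (by linarith)

end OptimalHNF

theorem hnf_shortest_vector_in_box_general (N : ℕ) (D : ℤ) (hD : 1 ≤ D)
    (H : Matrix (Fin N) (Fin N) ℤ)
    (lastIdx : Fin N)
    (hdiag : ∀ i : Fin N, i ≠ lastIdx → H i i = 1)
    (hDD : H lastIdx lastIdx = D)
    (hoff : ∀ i j : Fin N, i ≠ j → j ≠ lastIdx → H i j = 0)
    (hcol : ∀ i : Fin N, i ≠ lastIdx → 0 ≤ H i lastIdx ∧ H i lastIdx < D) :
    ∃ x : Fin N → ℤ, x ≠ 0 ∧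
      (∀ i : Fin N, i ≠ lastIdx →
        |((x i : ℤ) : ℝ)| ≤ Real.sqrt N * (D : ℝ) ^ ((1 : ℝ) / N)) ∧
      |((x lastIdx : ℤ) : ℝ)| ≤ (N : ℝ) ^ ((3 : ℝ) / 2) * (D : ℝ) ^ ((1 : ℝ) / N) ∧
      euclNorm (fun j => ((x ᵥ* H) j : ℝ)) = lambda1Int H := by
  obtain ⟨x, hx0, hx⟩ := exists_euclNorm_eq_lambda1Int lastIdx.pos H
  have hlambda := lambda1Int_le_sqrt_mul_rpow hD hdiag hDD hoff
  have hcoeff : ∀ i, i ≠ lastIdx → |(x i : ℝ)| ≤ lambda1Int H := fun i hi => by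
    rw [← hx, ← vecMul_apply_of_ne hdiag hoff x hi]
    exact abs_le_euclNorm (fun j => ((x ᵥ* H) j : ℝ)) i
  have hlast := abs_last_le_mul hD hDD hcol hcoeff
    (hx ▸ abs_le_euclNorm (fun j => ((x ᵥ* H) j : ℝ)) lastIdx)
  refine ⟨x, hx0, fun i hi => (hcoeff i hi).trans hlambda, ?_, hx⟩
  calc |(x lastIdx : ℝ)| ≤ N * lambda1Int H := hlast
    _ ≤ N * (√N * (D : ℝ) ^ ((1 : ℝ) / N)) := by gcongr
    _ = (N : ℝ) ^ ((3 : ℝ) / 2) * (D : ℝ) ^ ((1 : ℝ) / N) := by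
        rw [natCast_rpow_three_halves]; ring

/-- for an optimal HNF row basis `H` of a full-rank integer lattice with
determinant `D ≥ 1`, a shortest vector of the lattice is represented by a nonzero
coefficient vector `x ∈ ℤ^N` with `|x i| ≤ √N · D^{1/N}` for `i ≠ N-1` and
`|x_{N-1}| ≤ N^{3/2} · D^{1/N}`. -/
theorem hnf_shortest_vector_in_box (N : ℕ) (hN : 0 < N) (D : ℤ) (hD : 1 ≤ D)
    (H : Matrix (Fin N) (Fin N) ℤ)
    (lastIdx : Fin N) (hlast : (lastIdx : ℕ) = N - 1)
    (hdet : H.det = D)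
    (hdiag : ∀ i : Fin N, i ≠ lastIdx → H i i = 1)
    (hDD : H lastIdx lastIdx = D)
    (hoff : ∀ i j : Fin N, i ≠ j → j ≠ lastIdx → H i j = 0)
    (hcol : ∀ i : Fin N, i ≠ lastIdx → 0 ≤ H i lastIdx ∧ H i lastIdx < D) :
    ∃ x : Fin N → ℤ, x ≠ 0 ∧
      (∀ i : Fin N, i ≠ lastIdx →
        |((x i : ℤ) : ℝ)| ≤ Real.sqrt N * (D : ℝ) ^ ((1 : ℝ) / N)) ∧
      |((x lastIdx : ℤ) : ℝ)| ≤ (N : ℝ) ^ ((3 : ℝ) / 2) * (D : ℝ) ^ ((1 : ℝ) / N) ∧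
      euclNorm (fun j => ((x ᵥ* H) j : ℝ)) = lambda1Int H :=
  hnf_shortest_vector_in_box_general N D hD H lastIdx hdiag hDD hoff hcol
end

section
/- Let b_1, …, b_N ∈ ℝ^N be linearly independent vectors forming the rows of a matrix B with Gram matrix G = B·Bᵀ, and let k ∈ ℕ. Consider the diagonal problem-Hamiltonian matrix H_P, indexed by configurations s ∈ ({0,1}^{k+1})^N, whose diagonal entry at s is x(s)ᵀ G x(s), where x(s)_j = Σ_{p=0}^{k} 2^p · s_{p,j} − 2^k is the binary-encoded value of the j-th qudit. Then the set of diagonal entries (equivalently, the set of eigenvalues) of H_P equals the set of squared Euclidean norms {‖x·B‖² : x ∈ ℤ^N, −2^k ≤ x_j ≤ 2^k − 1 for all j} of the lattice vectors whose coefficients lie in the encoded range. -/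
/-! Binary expansion makes each register `s j` range exactly over the integers in
`[-2^k, 2^k - 1]`, independently in each coordinate, and `xᵀ (B Bᵀ) x = ‖x B‖²`. -/

open Matrix Real Finset

/-- The binary-encoded coefficient vector of a qubit configuration
`s ∈ ({0,1}^{k+1})^N`: the `j`-th qudit value is `∑_p 2^p·s_{p,j} − 2^k`. -/
def binCoeff {N k : ℕ} (s : Fin N → Fin (k + 1) → ({0, 1} : Finset ℤ)) :
    Fin N → ℤ :=
  fun j => (∑ p : Fin (k + 1), 2 ^ (p : ℕ) * (s j p : ℤ)) - 2 ^ k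

theorem range_sum_two_pow_mul_bit : ∀ m : ℕ,
    Set.range (fun b : Fin m → ({0, 1} : Finset ℤ) => ∑ p : Fin m, 2 ^ (p : ℕ) * (b p : ℤ))
      = Set.Ico 0 (2 ^ m)
  | 0 => by ext n; simp; omega
  | m + 1 => by
    have hsucc (b : Fin (m + 1) → ({0, 1} : Finset ℤ)) :
        ∑ p : Fin (m + 1), 2 ^ (p : ℕ) * (b p : ℤ)
          = b 0 + 2 * ∑ p : Fin m, 2 ^ (p : ℕ) * (b p.succ : ℤ) := by
      simp only [Fin.sum_univ_succ, Fin.val_zero, pow_zero, one_mul, Fin.val_succ, pow_succ,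
        mul_sum]
      exact congrArg _ (sum_congr rfl fun p _ => by ring)
    ext n
    simp only [Set.mem_range, hsucc, Set.mem_Ico, pow_succ]
    constructor
    · rintro ⟨b, rfl⟩
      have hrest : ∑ p : Fin m, 2 ^ (p : ℕ) * (b p.succ : ℤ) ∈ Set.Ico 0 (2 ^ m) :=
        range_sum_two_pow_mul_bit m ▸ Set.mem_range_self fun p : Fin m => b p.succ
      have hb0 := (b 0).2
      simp only [mem_insert, mem_singleton, Set.mem_Ico] at hb0 hrest
      omega
    · rintro ⟨hn0, hn⟩
      obtain ⟨b, hb⟩ : n / 2 ∈ Set.range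
          (fun b : Fin m → ({0, 1} : Finset ℤ) => ∑ p : Fin m, 2 ^ (p : ℕ) * (b p : ℤ)) := by
        rw [range_sum_two_pow_mul_bit m, Set.mem_Ico]; omega
      refine ⟨Fin.cons ⟨n % 2, by simp only [mem_insert, mem_singleton]; omega⟩ b, ?_⟩
      simp only [Fin.cons_zero, Fin.cons_succ, hb]
      omega

theorem range_binCoeff (N k : ℕ) :
    Set.range (binCoeff (N := N) (k := k))
      = Set.univ.pi fun _ => Set.Icc (-2 ^ k) (2 ^ k - 1) := by
  change Set.range (Pi.map fun _ (b : Fin (k + 1) → ({0, 1} : Finset ℤ)) =>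
    (∑ p : Fin (k + 1), 2 ^ (p : ℕ) * (b p : ℤ)) - 2 ^ k) = _
  rw [Set.range_piMap]
  refine congrArg _ (funext fun _ => Set.ext fun x => ?_)
  have hdigits := Set.ext_iff.mp (range_sum_two_pow_mul_bit (k + 1)) (x + 2 ^ k)
  simp only [Set.mem_range, Set.mem_Ico, Set.mem_Icc, pow_succ] at hdigits ⊢
  simp only [sub_eq_iff_eq_add, hdigits]
  omega

lemma sum_mul_mul_mul_transpose_apply {R m n : Type*} [CommSemiring R] [Fintype m] [Fintype n]
    (B : Matrix m n R) (a : m → R) :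
    ∑ i, ∑ j, a i * a j * (B * Bᵀ) i j = ∑ l, (a ᵥ* B) l ^ 2 := by
  calc ∑ i, ∑ j, a i * a j * (B * Bᵀ) i j = a ⬝ᵥ (B * Bᵀ) *ᵥ a := by
        simp only [dotProduct, mulVec, mul_sum]
        exact sum_congr rfl fun i _ => sum_congr rfl fun j _ => by ring
    _ = (a ᵥ* B) ⬝ᵥ (a ᵥ* B) := by
        rw [← mulVec_mulVec, dotProduct_mulVec, ← vecMul_transpose, transpose_transpose]
    _ = ∑ l, (a ᵥ* B) l ^ 2 := by simp only [dotProduct, sq]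

theorem euclNorm_sq {N : ℕ} (v : Fin N → ℝ) : euclNorm v ^ 2 = ∑ i, v i ^ 2 :=
  Real.sq_sqrt (sum_nonneg fun i _ => sq_nonneg (v i))

theorem binary_problem_hamiltonian_spectrum_general (N k : ℕ)
    (B : Matrix (Fin N) (Fin N) ℝ)
    (G : Matrix (Fin N) (Fin N) ℝ) (hG : G = B * Bᵀ) :
    Set.range
        (fun s : Fin N → Fin (k + 1) → ({0, 1} : Finset ℤ) =>
          ∑ i, ∑ j, (binCoeff s i : ℝ) * (binCoeff s j : ℝ) * G i j)
      = {r : ℝ | ∃ x : Fin N → ℤ,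
          (∀ j, -(2 ^ k : ℤ) ≤ x j ∧ x j ≤ 2 ^ k - 1) ∧
          r = euclNorm ((fun i => (x i : ℝ)) ᵥ* B) ^ 2} := by
  have hquad (x : Fin N → ℤ) : ∑ i, ∑ j, (x i : ℝ) * (x j : ℝ) * G i j
      = euclNorm ((fun i => (x i : ℝ)) ᵥ* B) ^ 2 := by
    rw [hG, sum_mul_mul_mul_transpose_apply, euclNorm_sq]
  have hrange (x : Fin N → ℤ) :
      x ∈ Set.range (binCoeff (N := N) (k := k)) ↔
        ∀ j, -(2 ^ k : ℤ) ≤ x j ∧ x j ≤ 2 ^ k - 1 := by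
    rw [range_binCoeff N k]; simp only [Set.mem_univ_pi, Set.mem_Icc]
  ext r
  constructor
  · rintro ⟨s, rfl⟩
    exact ⟨binCoeff s, (hrange _).mp (Set.mem_range_self s), hquad _⟩
  · rintro ⟨x, hx, rfl⟩
    obtain ⟨s, rfl⟩ := (hrange x).mpr hx
    exact ⟨s, hquad _⟩

/-- the set of diagonal entries (equivalently, eigenvalues) of the
diagonal problem Hamiltonian `H_P`, whose entry at configuration `s` is
`x(s)ᵀ G x(s)` with `G = B·Bᵀ`, equals the set of squared Euclidean norms
`{‖x·B‖² : x ∈ ℤ^N, −2^k ≤ x_j ≤ 2^k − 1}` of the lattice vectors whose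
coefficients lie in the binary-encoded range. -/
theorem binary_problem_hamiltonian_spectrum (N k : ℕ)
    (B : Matrix (Fin N) (Fin N) ℝ)
    (hB : LinearIndependent ℝ (fun i : Fin N => B i))
    (G : Matrix (Fin N) (Fin N) ℝ) (hG : G = B * Bᵀ) :
    Set.range
        (fun s : Fin N → Fin (k + 1) → ({0, 1} : Finset ℤ) =>
          ∑ i, ∑ j, (binCoeff s i : ℝ) * (binCoeff s j : ℝ) * G i j)
      = {r : ℝ | ∃ x : Fin N → ℤ,
          (∀ j, -(2 ^ k : ℤ) ≤ x j ∧ x j ≤ 2 ^ k - 1) ∧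
          r = euclNorm ((fun i => (x i : ℝ)) ᵥ* B) ^ 2} :=
  binary_problem_hamiltonian_spectrum_general N k B G hG
end
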